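/- Let M be a common meadow such that M_0 is a field. Then M' = (M_0 × (0·M \ {a})) ⊔ {a}, with operations (x,z)+(y,w) = (x+y, z·w) and (x,z)·(y,w) = (x·y, z·w) and a absorbing, is a common meadow with inverse (x,z)^{-1} = (x^{-1}, z) if x is invertible in M_0 and a otherwise. -/

import Mathlib

structure IsPreMeadow (P : Type*) [Add P] [Mul P] [Neg P] [Zero P] [One P] : Prop where
  padd_assoc : ∀ x y z : P, (x + y) + z = x + (y + z)
  padd_comm : ∀ x y : P, x + y = y + x
  padd_zero : ∀ x : P, x + 0 = x
  padd_neg : ∀ x : P, x + (-x) = 0 * x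
  pmul_assoc : ∀ x y z : P, (x * y) * z = x * (y * z)
  pmul_comm : ∀ x y : P, x * y = y * x
  pone_mul : ∀ x : P, 1 * x = x
  pmul_add : ∀ x y z : P, x * (y + z) = x * y + x * z
  pneg_neg : ∀ x : P, -(-x) = x
  pzero_mul_add : ∀ x y : P, 0 * (x + y) = 0 * x * y

structure IsPreMeadowA (P : Type*) [Add P] [Mul P] [Neg P] [Zero P] [One P] (a : P)
    extends IsPreMeadow P : Prop where
  a_mem : ∃ x : P, 0 * x = a
  a_fiber : ∀ x : P, 0 * x = a → x = a
  a_unique : ∀ z : P, (∃ x : P, 0 * x = z) →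
    (∀ x y : P, 0 * x = z → 0 * y = z → x = y) → z = a
  add_a : ∀ x : P, x + a = a

structure IsCommonMeadow (M : Type*) [Add M] [Mul M] [Neg M] [Zero M] [One M] [Inv M] (a : M)
    extends IsPreMeadowA M a : Prop where
  mmul_inv : ∀ x : M, x * x⁻¹ = 1 + 0 * x⁻¹
  minv_mul : ∀ x y : M, (x * y)⁻¹ = x⁻¹ * y⁻¹
  minv_one_add : ∀ x : M, (1 + 0 * x)⁻¹ = 1 + 0 * x
  minv_zero : (0 : M)⁻¹ = a

open Classical in
/-- Addition on `(M × M) ⊔ {a}` (elements `some (x, z)` standing for pairs in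
`M_0 × (0·M \ {a})`, `none` standing for `a`): `(x,z) + (y,w) = (x+y, z·w)` when `z·w ≠ a`,
and `a` when `z·w = a`; `a` is absorbing. -/
noncomputable def pAdd {M : Type*} [Add M] [Mul M] (a : M) :
    Option (M × M) → Option (M × M) → Option (M × M)
  | Option.some p, Option.some q =>
      if p.2 * q.2 = a then Option.none else Option.some (p.1 + q.1, p.2 * q.2)
  | _, _ => Option.none

open Classical in
/-- Multiplication on `(M × M) ⊔ {a}`: `(x,z) · (y,w) = (x·y, z·w)`, with `a` absorbing. -/
noncomputable def pMul {M : Type*} [Mul M] (a : M) :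
    Option (M × M) → Option (M × M) → Option (M × M)
  | Option.some p, Option.some q =>
      if p.2 * q.2 = a then Option.none else Option.some (p.1 * q.1, p.2 * q.2)
  | _, _ => Option.none

/-- Negation: `-(x,z) = (-x, z)`, `-a = a`. -/
def pNeg {M : Type*} [Neg M] : Option (M × M) → Option (M × M)
  | Option.some p => Option.some (-p.1, p.2)
  | Option.none => Option.none

open Classical in
/-- Inverse: `(x,z)⁻¹ = (x⁻¹, z)` if `x` is invertible in `M_0`, and `a` otherwise. -/
noncomputable def pInv {M : Type*} [Mul M] [Zero M] [One M] [Inv M] (a : M) :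
    Option (M × M) → Option (M × M)
  | Option.some p =>
      if ∃ y : M, 0 * y = 0 ∧ p.1 * y = 1 then Option.some (p.1⁻¹, p.2) else Option.none
  | Option.none => Option.none

/-- The carrier of `M' = (M_0 × (0·M \ {a})) ⊔ {a}` inside `Option (M × M)`. -/
def pCarrier {M : Type*} [Mul M] [Zero M] (a : M) : Set (Option (M × M)) :=
  insert Option.none
    {p : Option (M × M) | ∃ x z : M, p = Option.some (x, z) ∧
      0 * x = 0 ∧ (∃ w : M, 0 * w = z) ∧ z ≠ a}

/-- `S` together with the given operations and constants is a common meadow (all axioms of a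
pre-meadow with `a`, plus (M1)–(M4), stated relative to the carrier `S`). -/
structure IsCommonMeadowOn (M : Type*) (S : Set M) (add mul : M → M → M)
    (neg inv : M → M) (zero one aa : M) : Prop where
  zero_mem : zero ∈ S
  one_mem : one ∈ S
  a_mem' : aa ∈ S
  add_mem : ∀ x ∈ S, ∀ y ∈ S, add x y ∈ S
  mul_mem : ∀ x ∈ S, ∀ y ∈ S, mul x y ∈ S
  neg_mem : ∀ x ∈ S, neg x ∈ S
  inv_mem : ∀ x ∈ S, inv x ∈ S
  add_assoc : ∀ x ∈ S, ∀ y ∈ S, ∀ z ∈ S, add (add x y) z = add x (add y z)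
  add_comm : ∀ x ∈ S, ∀ y ∈ S, add x y = add y x
  add_zero : ∀ x ∈ S, add x zero = x
  add_neg : ∀ x ∈ S, add x (neg x) = mul zero x
  mul_assoc : ∀ x ∈ S, ∀ y ∈ S, ∀ z ∈ S, mul (mul x y) z = mul x (mul y z)
  mul_comm : ∀ x ∈ S, ∀ y ∈ S, mul x y = mul y x
  one_mul : ∀ x ∈ S, mul one x = x
  mul_add : ∀ x ∈ S, ∀ y ∈ S, ∀ z ∈ S, mul x (add y z) = add (mul x y) (mul x z)
  neg_neg : ∀ x ∈ S, neg (neg x) = x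
  zero_mul_add : ∀ x ∈ S, ∀ y ∈ S, mul zero (add x y) = mul (mul zero x) y
  a_in_zero_mul : ∃ x ∈ S, mul zero x = aa
  a_fiber : ∀ x ∈ S, mul zero x = aa → x = aa
  a_unique : ∀ z ∈ S, (∃ x ∈ S, mul zero x = z) →
    (∀ x ∈ S, ∀ y ∈ S, mul zero x = z → mul zero y = z → x = y) → z = aa
  add_a : ∀ x ∈ S, add x aa = aa
  mul_inv : ∀ x ∈ S, mul x (inv x) = add one (mul zero (inv x))
  inv_mul_rev : ∀ x ∈ S, ∀ y ∈ S, inv (mul x y) = mul (inv x) (inv y)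
  inv_one_add : ∀ x ∈ S, inv (add one (mul zero x)) = add one (mul zero x)
  inv_zero : inv zero = aa

section FlasqueAux

variable {M : Type*} [Add M] [Mul M] [Neg M] [Zero M] [One M] [Inv M] {a : M}
variable (h : IsCommonMeadow M a)
include h

lemma cmz1 : (0:M) * 1 = 0 := by rw [h.pmul_comm]; exact h.pone_mul 0

lemma cmzneg1 : (0:M) * (-1) = 0 := by
  have e := h.padd_neg (-1)
  rw [h.pneg_neg, h.padd_comm, h.padd_neg 1, cmz1 h] at e
  exact e.symm

lemma cmz0 : (0:M) * 0 = 0 := by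
  have e := h.pzero_mul_add 1 (-1)
  rw [h.padd_neg 1, cmz1 h, cmzneg1 h] at e
  exact e

lemma cmzz : ∀ w : M, (0:M) * (0 * w) = 0 * w := fun w => by
  rw [← h.pmul_assoc, cmz0 h]

lemma cmxplus : ∀ x : M, x + 0 * x = x := by
  intro x
  have e := h.pmul_add x 1 0
  rw [h.padd_zero 1] at e
  rw [h.pmul_comm x 1, h.pone_mul] at e
  rw [h.pmul_comm x 0] at e
  exact e.symm

lemma cmidem : ∀ w : M, ((0:M) * w) * (0 * w) = 0 * w := fun w => by
  have e := h.pzero_mul_add w (0 * w)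
  rw [cmxplus h w] at e
  exact e.symm

lemma cmza : (0:M) * a = a := by
  obtain ⟨t, ht⟩ := h.a_mem
  rw [← ht]; exact cmzz h t

lemma cm0nea (hnt : (1:M) ≠ 0) : (0:M) ≠ a := by
  intro e
  apply hnt
  have e1 : (1:M) + 0 = 1 := h.padd_zero 1
  rw [e, h.add_a 1] at e1
  exact (e1.symm.trans e.symm)

lemma cmainv : ∀ x : M, a * x⁻¹ = a := by
  intro x
  have hinv : ((0:M) * x)⁻¹ = a * x⁻¹ := by rw [h.minv_mul, h.minv_zero]
  have hA : (0:M) * (a * x⁻¹) = a * x⁻¹ := by rw [← h.pmul_assoc, cmza h]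
  have hM1 := h.mmul_inv (0 * x)
  rw [hinv, hA] at hM1
  have lhs : ((0:M) * x) * (a * x⁻¹) = a := by
    calc ((0:M) * x) * (a * x⁻¹) = 0 * (x * (a * x⁻¹)) := h.pmul_assoc _ _ _
      _ = 0 * ((x * a) * x⁻¹) := by rw [h.pmul_assoc x a]
      _ = 0 * ((a * x) * x⁻¹) := by rw [h.pmul_comm x a]
      _ = 0 * (a * (x * x⁻¹)) := by rw [h.pmul_assoc a x]
      _ = ((0:M) * a) * (x * x⁻¹) := (h.pmul_assoc _ _ _).symm
      _ = a * (x * x⁻¹) := by rw [cmza h]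
      _ = a * (1 + 0 * x⁻¹) := by rw [h.mmul_inv x]
      _ = a * 1 + a * (0 * x⁻¹) := h.pmul_add _ _ _
      _ = 1 * a + a * (0 * x⁻¹) := by rw [h.pmul_comm a 1]
      _ = a + a * (0 * x⁻¹) := by rw [h.pone_mul]
      _ = a * (0 * x⁻¹) + a := h.padd_comm _ _
      _ = a := h.add_a _
  rw [lhs] at hM1
  have e : (0:M) * a = 0 * (1 + a * x⁻¹) := by rw [← hM1]
  rw [cmza h, h.pzero_mul_add, cmz1 h, hA] at e
  exact e.symm

lemma cma0M : ∀ y : M, a * (0 * y) = a := by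
  intro y
  have hM1 := h.mmul_inv (0 * y)
  have hi : ((0:M) * y)⁻¹ = a := by rw [h.minv_mul, h.minv_zero]; exact cmainv h y
  rw [hi, cmza h, h.add_a 1] at hM1
  rw [h.pmul_comm a (0 * y)]
  exact hM1

lemma cmabsorb : ∀ x : M, a * x = a := by
  intro x
  obtain ⟨t, ht⟩ := h.a_mem
  have haa : a * a = a := by have e := cma0M h t; rw [ht] at e; exact e
  have e1 : (0:M) * (a * x) = a * x := by rw [← h.pmul_assoc, cmza h]
  have e2 : a * (0 * (a * x)) = a := cma0M h (a * x)
  rw [e1] at e2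
  have e3 : a * (a * x) = a * x := by rw [← h.pmul_assoc, haa]
  rw [e3] at e2
  exact e2

lemma cminv1 : (1:M)⁻¹ = 1 := by
  have e := h.minv_one_add 0
  rw [cmz0 h, h.padd_zero] at e
  exact e

lemma cmM0inv (p y : M) (hy : 0 * y = 0) (hpy : p * y = 1) : (0:M) * p⁻¹ = 0 := by
  have e1 : p⁻¹ * y⁻¹ = 1 := by rw [← h.minv_mul, hpy, cminv1 h]
  have e2 : ((0:M) * p⁻¹) * y⁻¹ = 0 := by rw [h.pmul_assoc, e1]; exact cmz1 h
  have p1 : ((0:M) * p⁻¹) * (y⁻¹ * y) = 0 := by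
    rw [← h.pmul_assoc, e2]; exact hy
  have p2 : ((0:M) * p⁻¹) * (y⁻¹ * y) = 0 * p⁻¹ := by
    rw [h.pmul_comm y⁻¹ y, h.mmul_inv y, h.pmul_add]
    have q1 : ((0:M) * p⁻¹) * 1 = 0 * p⁻¹ := by rw [h.pmul_comm, h.pone_mul]
    have q2 : ((0:M) * p⁻¹) * (0 * y⁻¹) = 0 := by
      calc ((0:M) * p⁻¹) * (0 * y⁻¹) = 0 * (p⁻¹ * (0 * y⁻¹)) := h.pmul_assoc _ _ _
        _ = 0 * ((p⁻¹ * 0) * y⁻¹) := by rw [h.pmul_assoc p⁻¹]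
        _ = 0 * ((0 * p⁻¹) * y⁻¹) := by rw [h.pmul_comm p⁻¹ 0]
        _ = 0 * (0 * (p⁻¹ * y⁻¹)) := by rw [h.pmul_assoc 0 p⁻¹]
        _ = 0 * (p⁻¹ * y⁻¹) := cmzz h _
        _ = 0 * 1 := by rw [e1]
        _ = 0 := cmz1 h
    rw [q1, q2, h.padd_zero]
  exact p2.symm.trans p1

lemma cmM0add (p q : M) (hp : 0 * p = 0) (hq : 0 * q = 0) : (0:M) * (p + q) = 0 := by
  rw [h.pzero_mul_add, hp]; exact hq

lemma cmM0mul (p q : M) (hp : 0 * p = 0) (hq : 0 * q = 0) : (0:M) * (p * q) = 0 := by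
  rw [← h.pmul_assoc, hp]; exact hq

lemma cmM0neg (p : M) (hp : 0 * p = 0) : (0:M) * (-p) = 0 := by
  have e := h.pzero_mul_add p (-p)
  rw [h.padd_neg p, hp, cmz0 h] at e
  exact e.symm

end FlasqueAux

set_option linter.unusedSectionVars false

section OptAux

variable {M : Type*} [Add M] [Mul M] [Neg M] [Zero M] [One M] [Inv M]

open Classical in
lemma pAdd_ss (a : M) (p q : M × M) :
    pAdd a (Option.some p) (Option.some q) =
      if p.2 * q.2 = a then Option.none else Option.some (p.1 + q.1, p.2 * q.2) := rfl

open Classical in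
lemma pMul_ss (a : M) (p q : M × M) :
    pMul a (Option.some p) (Option.some q) =
      if p.2 * q.2 = a then Option.none else Option.some (p.1 * q.1, p.2 * q.2) := rfl

lemma pAdd_nr (a : M) (x : Option (M × M)) : pAdd a x Option.none = Option.none := by
  cases x <;> rfl

lemma pAdd_nl (a : M) (x : Option (M × M)) : pAdd a Option.none x = Option.none := by
  cases x <;> rfl

lemma pMul_nr (a : M) (x : Option (M × M)) : pMul a x Option.none = Option.none := by
  cases x <;> rfl

lemma pMul_nl (a : M) (x : Option (M × M)) : pMul a Option.none x = Option.none := by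
  cases x <;> rfl

open Classical in
lemma pInv_s (a : M) (p : M × M) :
    pInv a (Option.some p) =
      if ∃ y : M, 0 * y = 0 ∧ p.1 * y = 1 then Option.some (p.1⁻¹, p.2) else Option.none := rfl

lemma pInv_n (a : M) : pInv a (Option.none : Option (M × M)) = Option.none := rfl

lemma mem_pC_none {a : M} : (Option.none : Option (M × M)) ∈ pCarrier a :=
  Set.mem_insert _ _

lemma mem_pC_some {a x z : M} :
    Option.some (x, z) ∈ pCarrier a ↔ 0 * x = 0 ∧ (∃ w : M, 0 * w = z) ∧ z ≠ a := by
  constructor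
  · intro hm
    rcases hm with hm | ⟨x', z', he, h1, h2, h3⟩
    · exact absurd hm (by simp)
    · obtain ⟨rfl, rfl⟩ : x = x' ∧ z = z' := by
        have := Option.some.inj he
        exact ⟨congrArg Prod.fst this, congrArg Prod.snd this⟩
      exact ⟨h1, h2, h3⟩
  · rintro ⟨h1, h2, h3⟩
    exact Or.inr ⟨x, z, rfl, h1, h2, h3⟩

end OptAux

/-- Let `M` be a common meadow whose ring `M_0` is a field. Then
`M' = (M_0 × (0·M \ {a})) ⊔ {a}` with componentwise operations
`(x,z)+(y,w) = (x+y, z·w)`, `(x,z)·(y,w) = (x·y, z·w)`, `a` absorbing, zero `(0,0)`,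
one `(1,0)` and inverse `(x,z)⁻¹ = (x⁻¹, z)` if `x` is invertible in `M_0` (and `a`
otherwise), is a common meadow. -/
theorem flasque_meadows_stmt10 {M : Type*} [Add M] [Mul M] [Neg M] [Zero M] [One M] [Inv M]
    {a : M} (h : IsCommonMeadow M a)
    (hnt : (1 : M) ≠ 0)
    (hfield : ∀ x : M, 0 * x = 0 → x ≠ 0 → ∃ y : M, 0 * y = 0 ∧ x * y = 1) :
    IsCommonMeadowOn (Option (M × M)) (pCarrier a) (pAdd a) (pMul a) pNeg (pInv a)
      (Option.some ((0 : M), (0 : M))) (Option.some ((1 : M), (0 : M))) Option.none := by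
  classical
  have hz1 : (0:M) * 1 = 0 := cmz1 h
  have hz0 : (0:M) * 0 = 0 := cmz0 h
  have hzz : ∀ w : M, (0:M) * (0 * w) = 0 * w := cmzz h
  have hid : ∀ w : M, ((0:M) * w) * (0 * w) = 0 * w := cmidem h
  have habs : ∀ x : M, a * x = a := cmabsorb h
  have habs' : ∀ x : M, x * a = a := fun x => by rw [h.pmul_comm]; exact habs x
  have h0a : (0:M) ≠ a := cm0nea h hnt
  have hz_of : ∀ z : M, (∃ w : M, 0 * w = z) → (0:M) * z = z := by
    rintro z ⟨w, rfl⟩; exact hzz w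
  have hidm : ∀ z : M, (∃ w : M, 0 * w = z) → z * z = z := by
    rintro z ⟨w, rfl⟩; exact hid w
  have h0M_mul : ∀ (z z' : M), (∃ w, (0:M) * w = z) → (∃ w, (0:M) * w = z * z') := by
    rintro z z' ⟨w, rfl⟩; exact ⟨w * z', (h.pmul_assoc 0 w z').symm⟩
  have hsplit : ∀ (u v s : M), u * u = u → (u * v) * (u * s) = u * (v * s) := by
    intro u v s huu
    calc (u * v) * (u * s) = u * (v * (u * s)) := h.pmul_assoc _ _ _
      _ = u * ((v * u) * s) := by rw [← h.pmul_assoc v u s]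
      _ = u * ((u * v) * s) := by rw [h.pmul_comm v u]
      _ = u * (u * (v * s)) := by rw [h.pmul_assoc u v s]
      _ = (u * u) * (v * s) := (h.pmul_assoc u u (v * s)).symm
      _ = u * (v * s) := by rw [huu]
  have memI : ∀ (x z : M), 0 * x = 0 → (∃ w : M, 0 * w = z) → z ≠ a →
      Option.some (x, z) ∈ pCarrier a := fun x z h1 h2 h3 => mem_pC_some.mpr ⟨h1, h2, h3⟩
  refine
  { zero_mem := memI 0 0 hz0 ⟨0, hz0⟩ h0a
    one_mem := memI 1 0 hz1 ⟨0, hz0⟩ h0a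
    a_mem' := mem_pC_none
    add_mem := ?_
    mul_mem := ?_
    neg_mem := ?_
    inv_mem := ?_
    add_assoc := ?_
    add_comm := ?_
    add_zero := ?_
    add_neg := ?_
    mul_assoc := ?_
    mul_comm := ?_
    one_mul := ?_
    mul_add := ?_
    neg_neg := ?_
    zero_mul_add := ?_
    a_in_zero_mul := ⟨Option.none, mem_pC_none, pMul_nr a _⟩
    a_fiber := ?_
    a_unique := ?_
    add_a := fun x _ => pAdd_nr a x
    mul_inv := ?_
    inv_mul_rev := ?_
    inv_one_add := ?_
    inv_zero := ?_ }
  -- add_mem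
  · intro x hx y hy
    cases x with
    | none => rw [pAdd_nl]; exact mem_pC_none
    | some p =>
      cases y with
      | none => rw [pAdd_nr]; exact mem_pC_none
      | some q =>
        obtain ⟨hp1, hpw, hp3⟩ := mem_pC_some.mp hx
        obtain ⟨hq1, hqw, hq3⟩ := mem_pC_some.mp hy
        rw [pAdd_ss]
        by_cases hc : p.2 * q.2 = a
        · rw [if_pos hc]; exact mem_pC_none
        · rw [if_neg hc]
          exact memI _ _ (cmM0add h _ _ hp1 hq1) (h0M_mul _ _ hpw) hc
  -- mul_mem
  · intro x hx y hy
    cases x with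
    | none => rw [pMul_nl]; exact mem_pC_none
    | some p =>
      cases y with
      | none => rw [pMul_nr]; exact mem_pC_none
      | some q =>
        obtain ⟨hp1, hpw, hp3⟩ := mem_pC_some.mp hx
        obtain ⟨hq1, hqw, hq3⟩ := mem_pC_some.mp hy
        rw [pMul_ss]
        by_cases hc : p.2 * q.2 = a
        · rw [if_pos hc]; exact mem_pC_none
        · rw [if_neg hc]
          exact memI _ _ (cmM0mul h _ _ hp1 hq1) (h0M_mul _ _ hpw) hc
  -- neg_mem
  · intro x hx
    cases x with
    | none => exact mem_pC_none
    | some p =>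
      obtain ⟨hp1, hpw, hp3⟩ := mem_pC_some.mp hx
      exact memI _ _ (cmM0neg h _ hp1) hpw hp3
  -- inv_mem
  · intro x hx
    cases x with
    | none => exact mem_pC_none
    | some p =>
      obtain ⟨hp1, hpw, hp3⟩ := mem_pC_some.mp hx
      rw [pInv_s]
      by_cases hc : ∃ y : M, 0 * y = 0 ∧ p.1 * y = 1
      · rw [if_pos hc]
        obtain ⟨y, hy1, hy2⟩ := hc
        exact memI _ _ (cmM0inv h p.1 y hy1 hy2) hpw hp3
      · rw [if_neg hc]; exact mem_pC_none
  -- add_assoc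
  · intro x _ y _ z _
    cases x with
    | none => simp only [pAdd_nl]
    | some p =>
      cases y with
      | none => simp only [pAdd_nl, pAdd_nr]
      | some q =>
        cases z with
        | none => simp only [pAdd_nr]
        | some r =>
          rw [pAdd_ss a p q, pAdd_ss a q r]
          by_cases h1 : p.2 * q.2 = a
          · rw [if_pos h1, pAdd_nl]
            by_cases h2 : q.2 * r.2 = a
            · rw [if_pos h2, pAdd_nr]
            · rw [if_neg h2, pAdd_ss]
              have h3 : p.2 * ((q.1 + r.1, q.2 * r.2) : M × M).2 = a := by
                show p.2 * (q.2 * r.2) = a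
                rw [← h.pmul_assoc, h1]; exact habs r.2
              rw [if_pos h3]
          · rw [if_neg h1]
            by_cases h2 : q.2 * r.2 = a
            · rw [if_pos h2, pAdd_nr, pAdd_ss]
              have h3 : ((p.1 + q.1, p.2 * q.2) : M × M).2 * r.2 = a := by
                show (p.2 * q.2) * r.2 = a
                rw [h.pmul_assoc, h2]; exact habs' p.2
              rw [if_pos h3]
            · rw [if_neg h2, pAdd_ss, pAdd_ss]
              dsimp only
              rw [h.pmul_assoc p.2 q.2 r.2, h.padd_assoc p.1 q.1 r.1]
  -- add_comm
  · intro x _ y _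
    cases x with
    | none => rw [pAdd_nl, pAdd_nr]
    | some p =>
      cases y with
      | none => rw [pAdd_nl, pAdd_nr]
      | some q =>
        rw [pAdd_ss, pAdd_ss, h.pmul_comm q.2 p.2, h.padd_comm q.1 p.1]
  -- add_zero
  · intro x hx
    cases x with
    | none => rw [pAdd_nl]
    | some p =>
      obtain ⟨hp1, hpw, hp3⟩ := mem_pC_some.mp hx
      have e0 : (0:M) * p.2 = p.2 := hz_of _ hpw
      rw [pAdd_ss]
      dsimp only
      have e2 : p.2 * 0 = p.2 := by rw [h.pmul_comm]; exact e0
      rw [e2, if_neg hp3, h.padd_zero p.1]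
  -- add_neg
  · intro x hx
    cases x with
    | none => rw [pMul_nr]; rfl
    | some p =>
      obtain ⟨hp1, hpw, hp3⟩ := mem_pC_some.mp hx
      have e0 : (0:M) * p.2 = p.2 := hz_of _ hpw
      have hpp : p.2 * p.2 = p.2 := hidm _ hpw
      simp only [pNeg]
      rw [pAdd_ss, pMul_ss]
      dsimp only
      rw [hpp, e0, if_neg hp3, if_neg hp3, h.padd_neg p.1, hp1]
  -- mul_assoc
  · intro x _ y _ z _
    cases x with
    | none => simp only [pMul_nl]
    | some p =>
      cases y with
      | none => simp only [pMul_nl, pMul_nr]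
      | some q =>
        cases z with
        | none => simp only [pMul_nr]
        | some r =>
          rw [pMul_ss a p q, pMul_ss a q r]
          by_cases h1 : p.2 * q.2 = a
          · rw [if_pos h1, pMul_nl]
            by_cases h2 : q.2 * r.2 = a
            · rw [if_pos h2, pMul_nr]
            · rw [if_neg h2, pMul_ss]
              have h3 : p.2 * ((q.1 * r.1, q.2 * r.2) : M × M).2 = a := by
                show p.2 * (q.2 * r.2) = a
                rw [← h.pmul_assoc, h1]; exact habs r.2
              rw [if_pos h3]
          · rw [if_neg h1]
            by_cases h2 : q.2 * r.2 = a
            · rw [if_pos h2, pMul_nr, pMul_ss]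
              have h3 : ((p.1 * q.1, p.2 * q.2) : M × M).2 * r.2 = a := by
                show (p.2 * q.2) * r.2 = a
                rw [h.pmul_assoc, h2]; exact habs' p.2
              rw [if_pos h3]
            · rw [if_neg h2, pMul_ss, pMul_ss]
              dsimp only
              rw [h.pmul_assoc p.2 q.2 r.2, h.pmul_assoc p.1 q.1 r.1]
  -- mul_comm
  · intro x _ y _
    cases x with
    | none => rw [pMul_nl, pMul_nr]
    | some p =>
      cases y with
      | none => rw [pMul_nl, pMul_nr]
      | some q =>
        rw [pMul_ss, pMul_ss, h.pmul_comm q.2 p.2, h.pmul_comm q.1 p.1]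
  -- one_mul
  · intro x hx
    cases x with
    | none => rw [pMul_nr]
    | some p =>
      obtain ⟨hp1, hpw, hp3⟩ := mem_pC_some.mp hx
      have e0 : (0:M) * p.2 = p.2 := hz_of _ hpw
      rw [pMul_ss]
      dsimp only
      rw [e0, if_neg hp3, h.pone_mul p.1]
  -- mul_add
  · intro x hx y _ z _
    cases x with
    | none => simp only [pMul_nl, pAdd_nl]
    | some p =>
      obtain ⟨hp1, hpw, hp3⟩ := mem_pC_some.mp hx
      have hpp : p.2 * p.2 = p.2 := hidm _ hpw
      cases y with
      | none => simp only [pAdd_nl, pMul_nr]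
      | some q =>
        cases z with
        | none => simp only [pAdd_nr, pMul_nr]
        | some r =>
          rw [pAdd_ss a q r]
          by_cases h1 : q.2 * r.2 = a
          · rw [if_pos h1, pMul_nr, pMul_ss a p q, pMul_ss a p r]
            by_cases h2 : p.2 * q.2 = a
            · rw [if_pos h2, pAdd_nl]
            · rw [if_neg h2]
              by_cases h3 : p.2 * r.2 = a
              · rw [if_pos h3, pAdd_nr]
              · rw [if_neg h3, pAdd_ss]
                dsimp only
                have h5 : (p.2 * q.2) * (p.2 * r.2) = a := by
                  rw [hsplit p.2 q.2 r.2 hpp, h1]; exact habs' p.2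
                rw [if_pos h5]
          · rw [if_neg h1, pMul_ss a p _, pMul_ss a p q, pMul_ss a p r]
            dsimp only
            by_cases h2 : p.2 * q.2 = a
            · have h4 : p.2 * (q.2 * r.2) = a := by
                rw [← h.pmul_assoc, h2]; exact habs r.2
              rw [if_pos h4, if_pos h2, pAdd_nl]
            · by_cases h3 : p.2 * r.2 = a
              · have h4 : p.2 * (q.2 * r.2) = a := by
                  rw [h.pmul_comm q.2 r.2, ← h.pmul_assoc, h3]; exact habs q.2
                rw [if_pos h4, if_neg h2, if_pos h3, pAdd_nr]
              · by_cases h4 : p.2 * (q.2 * r.2) = a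
                · have h5 : (p.2 * q.2) * (p.2 * r.2) = a := by
                    rw [hsplit p.2 q.2 r.2 hpp]; exact h4
                  rw [if_pos h4, if_neg h2, if_neg h3, pAdd_ss]
                  dsimp only
                  rw [if_pos h5]
                · have h5 : ¬ (p.2 * q.2) * (p.2 * r.2) = a := by
                    rw [hsplit p.2 q.2 r.2 hpp]; exact h4
                  rw [if_neg h4, if_neg h2, if_neg h3, pAdd_ss]
                  dsimp only
                  rw [if_neg h5, h.pmul_add p.1 q.1 r.1, hsplit p.2 q.2 r.2 hpp]
  -- neg_neg
  · intro x _
    cases x with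
    | none => rfl
    | some p => simp only [pNeg, h.pneg_neg]
  -- zero_mul_add
  · intro x hx y hy
    cases x with
    | none => simp only [pAdd_nl, pMul_nr, pMul_nl]
    | some p =>
      cases y with
      | none => simp only [pAdd_nr, pMul_nr]
      | some q =>
        obtain ⟨hp1, hpw, hp3⟩ := mem_pC_some.mp hx
        obtain ⟨hq1, hqw, hq3⟩ := mem_pC_some.mp hy
        have e0 : (0:M) * p.2 = p.2 := hz_of _ hpw
        rw [pAdd_ss a p q]
        by_cases h1 : p.2 * q.2 = a
        · rw [if_pos h1, pMul_nr, pMul_ss a _ p]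
          dsimp only
          rw [e0, hp1, if_neg hp3, pMul_ss]
          dsimp only
          rw [if_pos h1]
        · rw [if_neg h1, pMul_ss a _ _]
          dsimp only
          have e2 : (0:M) * (p.2 * q.2) = p.2 * q.2 := by
            rw [← h.pmul_assoc, e0]
          rw [e2, if_neg h1, pMul_ss a _ p]
          dsimp only
          rw [e0, hp1, if_neg hp3, pMul_ss]
          dsimp only
          rw [if_neg h1, h.pzero_mul_add p.1 q.1, hp1]
  -- a_fiber
  · intro x hx he
    cases x with
    | none => rfl
    | some p =>
      obtain ⟨hp1, hpw, hp3⟩ := mem_pC_some.mp hx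
      have e0 : (0:M) * p.2 = p.2 := hz_of _ hpw
      rw [pMul_ss] at he
      dsimp only at he
      rw [e0, if_neg hp3] at he
      exact nomatch he
  -- a_unique
  · intro z hz hex huniq
    cases z with
    | none => rfl
    | some v =>
      exfalso
      obtain ⟨x, hxS, hxe⟩ := hex
      cases x with
      | none =>
        rw [pMul_nr] at hxe
        exact nomatch hxe
      | some q =>
        obtain ⟨hq1, hqw, hq3⟩ := mem_pC_some.mp hxS
        have eq0 : (0:M) * q.2 = q.2 := hz_of _ hqw
        rw [pMul_ss] at hxe
        dsimp only at hxe
        rw [eq0, hq1, if_neg hq3] at hxe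
        have hv : v = ((0:M), q.2) := (Option.some.inj hxe).symm
        have m0 : Option.some ((0:M), q.2) ∈ pCarrier a := memI _ _ hz0 hqw hq3
        have m1 : Option.some ((1:M), q.2) ∈ pCarrier a := memI _ _ hz1 hqw hq3
        have c0 : pMul a (Option.some ((0:M), (0:M))) (Option.some ((0:M), q.2)) =
            Option.some v := by
          rw [pMul_ss]
          dsimp only
          rw [eq0, hz0, if_neg hq3, hv]
        have c1 : pMul a (Option.some ((0:M), (0:M))) (Option.some ((1:M), q.2)) =
            Option.some v := by
          rw [pMul_ss]
          dsimp only
          rw [eq0, hz1, if_neg hq3, hv]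
        have e01 := huniq _ m0 _ m1 c0 c1
        have : ((0:M), q.2) = ((1:M), q.2) := Option.some.inj e01
        exact hnt (congrArg Prod.fst this).symm
  -- mul_inv
  · intro x hx
    cases x with
    | none => rw [pInv_n, pMul_nr, pMul_nr, pAdd_nr]
    | some p =>
      obtain ⟨hp1, hpw, hp3⟩ := mem_pC_some.mp hx
      have e0 : (0:M) * p.2 = p.2 := hz_of _ hpw
      have hpp : p.2 * p.2 = p.2 := hidm _ hpw
      rw [pInv_s]
      by_cases hc : ∃ y : M, 0 * y = 0 ∧ p.1 * y = 1
      · rw [if_pos hc, pMul_ss, pMul_ss]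
        dsimp only
        rw [hpp, e0, if_neg hp3, if_neg hp3, pAdd_ss]
        dsimp only
        rw [e0, if_neg hp3, h.mmul_inv p.1]
      · rw [if_neg hc, pMul_nr, pMul_nr, pAdd_nr]
  -- inv_mul_rev
  · intro x hx y hy
    cases x with
    | none => simp only [pMul_nl, pInv_n]
    | some p =>
      cases y with
      | none => simp only [pMul_nr, pInv_n]
      | some q =>
        obtain ⟨hp1, hpw, hp3⟩ := mem_pC_some.mp hx
        obtain ⟨hq1, hqw, hq3⟩ := mem_pC_some.mp hy
        rw [pMul_ss a p q]
        by_cases h1 : p.2 * q.2 = a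
        · rw [if_pos h1, pInv_n, pInv_s, pInv_s]
          by_cases hcp : ∃ y' : M, 0 * y' = 0 ∧ p.1 * y' = 1
          · rw [if_pos hcp]
            by_cases hcq : ∃ y' : M, 0 * y' = 0 ∧ q.1 * y' = 1
            · rw [if_pos hcq, pMul_ss]
              dsimp only
              rw [if_pos h1]
            · rw [if_neg hcq, pMul_nr]
          · rw [if_neg hcp, pMul_nl]
        · rw [if_neg h1, pInv_s, pInv_s, pInv_s]
          dsimp only
          by_cases hcp : ∃ y' : M, 0 * y' = 0 ∧ p.1 * y' = 1
          · by_cases hcq : ∃ y' : M, 0 * y' = 0 ∧ q.1 * y' = 1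
            · have hcpq : ∃ y' : M, 0 * y' = 0 ∧ (p.1 * q.1) * y' = 1 := by
                obtain ⟨y1, hy1, hy1'⟩ := hcp
                obtain ⟨y2, hy2, hy2'⟩ := hcq
                refine ⟨y1 * y2, cmM0mul h _ _ hy1 hy2, ?_⟩
                calc (p.1 * q.1) * (y1 * y2) = ((p.1 * q.1) * y1) * y2 :=
                      (h.pmul_assoc _ _ _).symm
                  _ = ((q.1 * p.1) * y1) * y2 := by rw [h.pmul_comm p.1 q.1]
                  _ = (q.1 * (p.1 * y1)) * y2 := by rw [h.pmul_assoc q.1]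
                  _ = (q.1 * 1) * y2 := by rw [hy1']
                  _ = (1 * q.1) * y2 := by rw [h.pmul_comm q.1 1]
                  _ = q.1 * y2 := by rw [h.pone_mul]
                  _ = 1 := hy2'
              rw [if_pos hcpq, if_pos hcp, if_pos hcq, pMul_ss]
              dsimp only
              rw [if_neg h1, h.minv_mul p.1 q.1]
            · have hcpq : ¬ ∃ y' : M, 0 * y' = 0 ∧ (p.1 * q.1) * y' = 1 := by
                rintro ⟨r, hr, hr'⟩
                apply hcq
                refine ⟨p.1 * r, cmM0mul h _ _ hp1 hr, ?_⟩
                calc q.1 * (p.1 * r) = (q.1 * p.1) * r := (h.pmul_assoc _ _ _).symm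
                  _ = (p.1 * q.1) * r := by rw [h.pmul_comm q.1 p.1]
                  _ = 1 := hr'
              rw [if_neg hcpq, if_pos hcp, if_neg hcq, pMul_nr]
          · have hcpq : ¬ ∃ y' : M, 0 * y' = 0 ∧ (p.1 * q.1) * y' = 1 := by
              rintro ⟨r, hr, hr'⟩
              refine hcp ⟨q.1 * r, cmM0mul h _ _ hq1 hr, ?_⟩
              rw [← h.pmul_assoc]; exact hr'
            rw [if_neg hcpq, if_neg hcp, pMul_nl]
  -- inv_one_add
  · intro x hx
    cases x with
    | none => simp only [pMul_nr, pAdd_nr, pInv_n]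
    | some p =>
      obtain ⟨hp1, hpw, hp3⟩ := mem_pC_some.mp hx
      have e0 : (0:M) * p.2 = p.2 := hz_of _ hpw
      rw [pMul_ss]
      dsimp only
      rw [e0, hp1, if_neg hp3, pAdd_ss]
      dsimp only
      rw [e0, if_neg hp3, h.padd_zero 1, pInv_s]
      dsimp only
      have hc : ∃ y : M, 0 * y = 0 ∧ 1 * y = 1 := ⟨1, hz1, h.pone_mul 1⟩
      rw [if_pos hc, cminv1 h]
  -- inv_zero
  · rw [pInv_s]
    dsimp only
    have hc : ¬ ∃ y : M, 0 * y = 0 ∧ 0 * y = 1 := by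
      rintro ⟨y, hy, hy'⟩
      exact hnt (hy'.symm.trans hy)
    rw [if_neg hc]
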